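/- arXiv:1801.04209 — 3 statements merged into one kernel-verified Lean document; each statement's English description precedes it below -/
import Mathlib

section
/- If φ ∈ L^∞(𝕋) is an inner function, i.e. |φ(z)| = 1 for almost every z ∈ 𝕋, then V_φ V_φ* = I on H²; equivalently, the adjoint V_φ* of the slant H-Toeplitz operator V_φ is an isometry. -/
/-! The slant operator `W` sends `e (2 * n)` to `e n` and kills the odd basis vectors, so
`W* (e n) = e (2 * n)`, `W W* = I`, and `W*` maps `H²` into itself. `K` maps the basis
`(e n)_{n ≥ 0}` of `H²` bijectively onto `(e n)_{n ∈ ℤ}`, so `K K* = I`. A Laurent operator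
commutes with its adjoint, so `M* M = I` forces `M M* = I`. Hence `V* = K* M* W*` on `H²`, and
`V V* = W P M K K* M* W* = W P W* = W W* = I`. -/

open scoped ComplexInnerProductSpace

noncomputable section

open scoped InnerProductSpace
open ContinuousLinearMap ComplexConjugate

namespace HilbertBasis

variable {ι ι' 𝕜 E F : Type*} [RCLike 𝕜]
  [NormedAddCommGroup E] [InnerProductSpace 𝕜 E] [NormedAddCommGroup F] [InnerProductSpace 𝕜 F]

theorem ext_inner (b : HilbertBasis ι 𝕜 E) {x y : E} (h : ∀ i, ⟪b i, x⟫_𝕜 = ⟪b i, y⟫_𝕜) :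
    x = y :=
  b.repr.injective <| lp.ext <| funext fun i => by rw [b.repr_apply_apply, b.repr_apply_apply, h]

theorem continuousLinearMap_ext (b : HilbertBasis ι 𝕜 E) {S T : E →L[𝕜] F}
    (h : ∀ i, S (b i) = T (b i)) : S = T :=
  ext_on (Submodule.dense_iff_topologicalClosure_eq_top.2 b.dense_span) (Set.forall_mem_range.2 h)

theorem adjoint_apply_of_map [CompleteSpace E] [CompleteSpace F] (b : HilbertBasis ι 𝕜 E)
    (b' : HilbertBasis ι' 𝕜 F) {f : ι' → ι} (hf : f.Injective) {T : E →L[𝕜] F}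
    (hT : ∀ j, T (b (f j)) = b' j)
    (hT₀ : ∀ i ∉ Set.range f, T (b i) = 0) (j : ι') : adjoint T (b' j) = b (f j) := by
  classical
  refine b.ext_inner fun i => ?_
  rw [adjoint_inner_right, orthonormal_iff_ite.mp b.orthonormal]
  by_cases hi : i ∈ Set.range f
  · obtain ⟨k, rfl⟩ := hi
    rw [hT, orthonormal_iff_ite.mp b'.orthonormal, hf.eq_iff]
  · rw [hT₀ i hi, inner_zero_left, if_neg (by rintro rfl; exact hi ⟨j, rfl⟩)]

theorem comp_adjoint_eq_id_of_map [CompleteSpace E] [CompleteSpace F] (b : HilbertBasis ι 𝕜 E)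
    (b' : HilbertBasis ι' 𝕜 F) {f : ι' → ι} (hf : f.Injective) {T : E →L[𝕜] F}
    (hT : ∀ j, T (b (f j)) = b' j)
    (hT₀ : ∀ i ∉ Set.range f, T (b i) = 0) : T ∘L adjoint T = ContinuousLinearMap.id 𝕜 F :=
  b'.continuousLinearMap_ext fun j => by
    rw [comp_apply, b.adjoint_apply_of_map b' hf hT hT₀, hT, id_apply]

theorem comp_adjoint_eq_adjoint_comp_of_inner_eq_sub [CompleteSpace E] {G : Type*}
    [AddCommGroup G] (e : HilbertBasis G 𝕜 E) {a : G → 𝕜} {M : E →L[𝕜] E}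
    (hM : ∀ i j, ⟪e i, M (e j)⟫_𝕜 = a (i - j)) : M ∘L adjoint M = adjoint M ∘L M := by
  refine e.continuousLinearMap_ext fun j => e.ext_inner fun i => ?_
  -- both sides are convolutions of `a` with `conj a`, matched by the reflection `k ↦ i + j - k`
  calc ⟪e i, M (adjoint M (e j))⟫_𝕜 = ∑' k, a (i - k) * conj (a (j - k)) := by
        rw [← adjoint_inner_left, ← e.tsum_inner_mul_inner]
        refine tsum_congr fun k => ?_
        rw [adjoint_inner_left, adjoint_inner_right, ← inner_conj_symm (M (e k)), hM, hM]
    _ = ∑' k, conj (a (k - i)) * a (k - j) := by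
        rw [← (Equiv.subLeft (i + j)).tsum_eq]
        refine tsum_congr fun k => ?_
        simp only [Equiv.subLeft_apply]
        rw [show j - (i + j - k) = k - i by abel, show i - (i + j - k) = k - j by abel, mul_comm]
    _ = ⟪e i, adjoint M (M (e j))⟫_𝕜 := by
        rw [adjoint_inner_right, ← e.tsum_inner_mul_inner]
        refine tsum_congr fun k => ?_
        rw [← inner_conj_symm (M (e i)), hM, hM]

end HilbertBasis

section SlantOperators

variable {𝕜 E F : Type*} [RCLike 𝕜] [NormedAddCommGroup E] [InnerProductSpace 𝕜 E]
  [CompleteSpace E] [NormedAddCommGroup F] [InnerProductSpace 𝕜 F] [CompleteSpace F]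

theorem HilbertBasis.adjoint_apply_of_apply_two_mul (e : HilbertBasis ℤ 𝕜 E) {W : E →L[𝕜] E}
    (hW : ∀ n : ℤ, W (e (2 * n)) = e n ∧ W (e (2 * n + 1)) = 0) (n : ℤ) :
    adjoint W (e n) = e (2 * n) :=
  e.adjoint_apply_of_map e (mul_right_injective₀ two_ne_zero) (fun n => (hW n).1)
    (fun i hi => by
      obtain ⟨n, rfl | rfl⟩ := Int.even_or_odd' i
      exacts [(hi ⟨n, rfl⟩).elim, (hW n).2]) n

theorem HilbertBasis.comp_adjoint_eq_id_of_apply_two_mul (e : HilbertBasis ℤ 𝕜 E)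
    {W : E →L[𝕜] E} (hW : ∀ n : ℤ, W (e (2 * n)) = e n ∧ W (e (2 * n + 1)) = 0) :
    W ∘L adjoint W = ContinuousLinearMap.id 𝕜 E :=
  e.continuousLinearMap_ext fun n => by
    rw [comp_apply, e.adjoint_apply_of_apply_two_mul hW, (hW n).1, id_apply]

theorem HilbertBasis.comp_adjoint_eq_id_of_apply_even_odd (b : HilbertBasis ℕ 𝕜 E)
    (e : HilbertBasis ℤ 𝕜 F) {K : E →L[𝕜] F}
    (hK : ∀ n : ℕ, K (b (2 * n)) = e n ∧ K (b (2 * n + 1)) = e (-(n : ℤ) - 1)) :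
    K ∘L adjoint K = ContinuousLinearMap.id 𝕜 F := by
  have hKe : ∀ j : ℤ, K (b (Equiv.intEquivNat j)) = e j := by
    rintro (n | n)
    · exact (hK n).1
    · rw [show Equiv.intEquivNat (Int.negSucc n) = 2 * n + 1 from rfl, (hK n).2, Int.negSucc_eq]
      congr 1
      ring
  exact b.comp_adjoint_eq_id_of_map e Equiv.intEquivNat.injective hKe
    fun i hi => (hi (Equiv.intEquivNat.surjective i)).elim

end SlantOperators

theorem ContinuousLinearMap.apply_mem_of_mem_topologicalClosure_span {ι 𝕜 E F : Type*}
    [RCLike 𝕜] [NormedAddCommGroup E] [InnerProductSpace 𝕜 E] [NormedAddCommGroup F]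
    [InnerProductSpace 𝕜 F] (T : E →L[𝕜] F) {v : ι → E} {H : Submodule 𝕜 F}
    (hH : IsClosed (H : Set F)) (hv : ∀ i, T (v i) ∈ H) {x : E}
    (hx : x ∈ (Submodule.span 𝕜 (Set.range v)).topologicalClosure) : T x ∈ H :=
  Submodule.topologicalClosure_minimal (t := H.comap T.toLinearMap) _
    (Submodule.span_le.2 (Set.range_subset_iff.2 hv)) (hH.preimage T.continuous) hx

theorem Orthonormal.exists_hilbertBasis_of_eq_topologicalClosure {ι 𝕜 E : Type*} [RCLike 𝕜]
    [NormedAddCommGroup E] [InnerProductSpace 𝕜 E] {v : ι → E} (hv : Orthonormal 𝕜 v)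
    {H : Submodule 𝕜 E} [CompleteSpace H]
    (hH : H = (Submodule.span 𝕜 (Set.range v)).topologicalClosure)
    (w : ι → H) (hw : ∀ i, (w i : E) = v i) : ∃ b : HilbertBasis ι 𝕜 H, ⇑b = w := by
  have hw' : Orthonormal 𝕜 w := by
    rw [← H.subtypeₗᵢ.orthonormal_comp_iff]
    convert hv using 1
    exact funext hw
  refine ⟨HilbertBasis.mkOfOrthogonalEqBot hw' ?_, HilbertBasis.coe_mkOfOrthogonalEqBot _ _⟩
  refine (Submodule.eq_bot_iff _).2 fun x hx => ?_
  have hxv : ∀ i, ⟪(x : E), v i⟫_𝕜 = 0 := fun i => by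
    rw [← hw, ← Submodule.coe_inner, inner_eq_zero_symm]
    exact Submodule.inner_right_of_mem_orthogonal (Submodule.subset_span (Set.mem_range_self i)) hx
  have hxH : (x : E) ∈ (Submodule.span 𝕜 (Set.range v))ᗮ := by
    have : Submodule.span 𝕜 (Set.range v) ≤ LinearMap.ker (innerₛₗ 𝕜 (x : E)) :=
      Submodule.span_le.2 (Set.range_subset_iff.2 hxv)
    exact (Submodule.mem_orthogonal' _ _).2 fun u hu => this hu
  rw [← Submodule.orthogonal_closure, ← hH] at hxH
  exact Subtype.ext (inner_self_eq_zero.1 (Submodule.inner_right_of_mem_orthogonal x.2 hxH))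

/-- If `φ` is inner, i.e. `|φ| = 1` a.e. (equivalently `M_φ* M_φ = I`),
then `V_φ V_φ* = I` on `H²`, i.e. `V_φ*` is an isometry. -/
theorem adjoint_isometry_of_inner
    {L2 : Type*} [NormedAddCommGroup L2] [InnerProductSpace ℂ L2] [CompleteSpace L2]
    -- the orthonormal (Fourier) basis `e n ↔ zⁿ` of `L²(𝕋)`
    (e : HilbertBasis ℤ ℂ L2)
    -- the Hardy space `H²`, the closed linear span of `{e n : n ≥ 0}`
    (H2 : Submodule ℂ L2) [CompleteSpace H2]
    (hH2 : H2 = (Submodule.span ℂ (Set.range fun n : ℕ => e (n : ℤ))).topologicalClosure)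
    (eH : ℕ → H2) (heH : ∀ n : ℕ, (eH n : L2) = e (n : ℤ))
    -- the operator `W`: `W e_{2n} = e n`, `W e_{2n+1} = 0` for all `n ∈ ℤ`
    (W : L2 →L[ℂ] L2)
    (hW : ∀ n : ℤ, W (e (2 * n)) = e n ∧ W (e (2 * n + 1)) = 0)
    -- the operator `K : H² → L²`: `K e_{2n} = e n`, `K e_{2n+1} = e_{-n-1}` for all `n ≥ 0`
    (K : H2 →L[ℂ] L2)
    (hK : ∀ n : ℕ, K (eH (2 * n)) = e (n : ℤ) ∧ K (eH (2 * n + 1)) = e (-(n : ℤ) - 1))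
    -- `φ ∈ L^∞`, encoded by its Fourier coefficients `a` and multiplication operator `M = M_φ`
    (a : ℤ → ℂ) (M : L2 →L[ℂ] L2)
    (hM : ∀ i j : ℤ, ⟪e i, M (e j)⟫ = a (i - j))
    -- the slant H-Toeplitz operator `V_φ = W P M_φ K : H² → H²`
    (V : H2 →L[ℂ] H2)
    (hV : ∀ f : H2, (V f : L2) = W ↑(Submodule.orthogonalProjection H2 (M (K f))))
    -- `φ` is inner: `|φ(z)| = 1` a.e., equivalently `M_φ* M_φ = M_{|φ|²} = I`
    (hinner : (ContinuousLinearMap.adjoint M).comp M = ContinuousLinearMap.id ℂ L2) :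
    V.comp (ContinuousLinearMap.adjoint V) = ContinuousLinearMap.id ℂ H2 := by
  obtain ⟨bH, rfl⟩ := (e.orthonormal.comp _ Nat.cast_injective)
    |>.exists_hilbertBasis_of_eq_topologicalClosure (v := fun n : ℕ => e n) hH2 eH heH
  have hWW := e.comp_adjoint_eq_id_of_apply_two_mul hW
  have hKK := bH.comp_adjoint_eq_id_of_apply_even_odd e hK
  have hMM : M ∘L adjoint M = ContinuousLinearMap.id ℂ L2 :=
    (e.comp_adjoint_eq_adjoint_comp_of_inner_eq_sub hM).trans hinner
  have hWH2 : ∀ g : H2, adjoint W g ∈ H2 := by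
    have hclosed : IsClosed (H2 : Set L2) := by
      rw [hH2]
      exact Submodule.isClosed_topologicalClosure _
    refine fun g => (adjoint W).apply_mem_of_mem_topologicalClosure_span hclosed (fun n => ?_)
      (hH2.le g.2)
    rw [e.adjoint_apply_of_apply_two_mul hW, ← Nat.cast_two, ← Nat.cast_mul, ← heH]
    exact (bH (2 * n)).2
  have hVadj : ∀ g : H2, adjoint V g = adjoint K (adjoint M (adjoint W g)) := by
    refine fun g => ext_inner_right ℂ fun f => ?_
    rw [adjoint_inner_left, Submodule.coe_inner, hV, ← adjoint_inner_left]
    change ⟪((⟨_, hWH2 g⟩ : H2) : L2), _⟫ = _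
    rw [← Submodule.coe_inner, Submodule.inner_orthogonalProjectionOnto_eq_of_mem_left,
      adjoint_inner_left K, adjoint_inner_left M]
  ext g
  rw [comp_apply, id_apply, hV, hVadj, ← comp_apply K, hKK, id_apply, ← comp_apply M, hMM,
    id_apply, H2.orthogonalProjectionOnto_mem_subspace_eq_self ⟨_, hWH2 g⟩]
  exact congr($hWW g)
end
end

section
/- For φ ∈ L^∞(𝕋), the slant H-Toeplitz operator V_φ is a compact operator on H² if and only if φ = 0. -/
/-! The matrix of `V_φ` in the basis `(e_n)_{n ≥ 0}` of `H²` has the entry `φ̂(2p - n)` in row `p`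
and column `2n`, so every Fourier coefficient `φ̂(k)` recurs along an orthonormal sequence of
columns, paired with unit rows. A compact operator sends an orthonormal sequence to a null
sequence (the images are weakly null, and compactness turns this into norm convergence along
subsequences), hence every `φ̂(k)` vanishes. Conversely `φ = 0` gives `M_φ = 0` and `V_φ = 0`. -/

open scoped ComplexInnerProductSpace
open Filter Topology

section Hilbert

open scoped InnerProductSpace

variable {𝕜 E F : Type*} [RCLike 𝕜] [NormedAddCommGroup E] [InnerProductSpace 𝕜 E]
  [NormedAddCommGroup F] [InnerProductSpace 𝕜 F]

theorem Orthonormal.tendsto_inner_right_atTop {v : ℕ → E} (hv : Orthonormal 𝕜 v) (x : E) :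
    Tendsto (fun n => ⟪x, v n⟫_𝕜) atTop (𝓝 0) := by
  have hsq : Tendsto (fun n => ‖⟪v n, x⟫_𝕜‖ ^ 2) atTop (𝓝 0) :=
    (hv.inner_products_summable x).tendsto_atTop_zero
  refine tendsto_zero_iff_norm_tendsto_zero.mpr ?_
  simpa [norm_inner_symm, Real.sqrt_sq (norm_nonneg _)] using hsq.sqrt

theorem IsCompactOperator.tendsto_apply_orthonormal [CompleteSpace E] [CompleteSpace F]
    {T : E →L[𝕜] F} (hT : IsCompactOperator T) {v : ℕ → E} (hv : Orthonormal 𝕜 v) :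
    Tendsto (fun n => T (v n)) atTop (𝓝 0) := by
  refine tendsto_of_subseq_tendsto fun ns hns => ?_
  obtain ⟨y, -, φ, hφ, hy⟩ := (hT.isCompact_closure_image_closedBall 1).tendsto_subseq
    (x := fun n => T (v (ns n))) fun n => subset_closure ⟨v (ns n), by simp [hv.1], rfl⟩
  have hweak : Tendsto (fun n => ⟪y, T (v (ns (φ n)))⟫_𝕜) atTop (𝓝 0) := by
    simp_rw [← ContinuousLinearMap.adjoint_inner_left]
    exact (hv.tendsto_inner_right_atTop _).comp (hns.comp hφ.tendsto_atTop)
  have hy0 : y = 0 :=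
    inner_self_eq_zero.mp (tendsto_nhds_unique (tendsto_const_nhds.inner hy) hweak)
  exact ⟨φ, hy0 ▸ hy⟩

theorem IsCompactOperator.eq_zero_of_forall_inner_apply_orthonormal_eq [CompleteSpace E]
    [CompleteSpace F] {T : E →L[𝕜] F} (hT : IsCompactOperator T) {v : ℕ → E}
    (hv : Orthonormal 𝕜 v) {w : ℕ → F} (hw : ∀ n, ‖w n‖ ≤ 1) {c : 𝕜}
    (hc : ∀ n, ⟪w n, T (v n)⟫_𝕜 = c) : c = 0 := by
  have hTv := (hT.tendsto_apply_orthonormal hv).norm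
  rw [norm_zero] at hTv
  refine norm_le_zero_iff.mp (ge_of_tendsto hTv (Eventually.of_forall fun n => ?_))
  calc ‖c‖ = ‖⟪w n, T (v n)⟫_𝕜‖ := by rw [hc]
    _ ≤ ‖w n‖ * ‖T (v n)‖ := norm_inner_le_norm _ _
    _ ≤ ‖T (v n)‖ := mul_le_of_le_one_left (norm_nonneg _) (hw n)

theorem HilbertBasis.eq_zero_of_forall_inner_eq_zero {ι : Type*} (b : HilbertBasis ι 𝕜 E) {x : E}
    (hx : ∀ i, ⟪b i, x⟫_𝕜 = 0) : x = 0 := by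
  refine b.repr.map_eq_zero_iff.mp (lp.ext (funext fun i => ?_))
  simp [b.repr_apply_apply, hx]

theorem HilbertBasis.ext_continuousLinearMap {ι G : Type*} [NormedAddCommGroup G]
    [NormedSpace 𝕜 G] (b : HilbertBasis ι 𝕜 E) {f g : E →L[𝕜] G} (h : ∀ i, f (b i) = g (b i)) :
    f = g :=
  ContinuousLinearMap.ext_on (Submodule.dense_iff_topologicalClosure_eq_top.mpr b.dense_span) <| by
    rintro _ ⟨i, rfl⟩
    exact h i

theorem HilbertBasis.continuousLinearMap_eq_zero {ι ι' : Type*} (b : HilbertBasis ι 𝕜 E)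
    (b' : HilbertBasis ι' 𝕜 F) {T : E →L[𝕜] F} (hT : ∀ i j, ⟪b' i, T (b j)⟫_𝕜 = 0) : T = 0 :=
  b.ext_continuousLinearMap fun j => b'.eq_zero_of_forall_inner_eq_zero fun i => hT i j

theorem HilbertBasis.inner_apply_eq_inner_two_mul (b : HilbertBasis ℤ 𝕜 E) {W : E →L[𝕜] E}
    (hW : ∀ n : ℤ, W (b (2 * n)) = b n ∧ W (b (2 * n + 1)) = 0) (p : ℤ) (x : E) :
    ⟪b p, W x⟫_𝕜 = ⟪b (2 * p), x⟫_𝕜 := by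
  suffices (innerSL 𝕜 (b p)).comp W = innerSL 𝕜 (b (2 * p)) from
    DFunLike.congr_fun this x
  refine b.ext_continuousLinearMap fun i => ?_
  have hb := orthonormal_iff_ite.mp b.orthonormal
  obtain ⟨m, rfl | rfl⟩ := Int.even_or_odd' i
  · simp [(hW m).1, hb]
  · simp only [ContinuousLinearMap.comp_apply, innerSL_apply_apply, (hW m).2, inner_zero_right]
    exact (b.orthonormal.inner_eq_zero (by omega)).symm

end Hilbert

theorem inner_slantHToeplitz_apply_even {L2 : Type*} [NormedAddCommGroup L2]
    [InnerProductSpace ℂ L2] (e : HilbertBasis ℤ ℂ L2) (H2 : Submodule ℂ L2) [CompleteSpace H2]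
    (eH : ℕ → H2) (heH : ∀ n : ℕ, (eH n : L2) = e (n : ℤ)) (W : L2 →L[ℂ] L2)
    (hW : ∀ n : ℤ, W (e (2 * n)) = e n ∧ W (e (2 * n + 1)) = 0) (K : H2 →L[ℂ] L2)
    (hK : ∀ n : ℕ, K (eH (2 * n)) = e (n : ℤ)) (a : ℤ → ℂ) (M : L2 →L[ℂ] L2)
    (hM : ∀ i j : ℤ, ⟪e i, M (e j)⟫ = a (i - j)) (V : H2 →L[ℂ] H2)
    (hV : ∀ f : H2, (V f : L2) = W ↑(H2.orthogonalProjectionOnto (M (K f)))) (p n : ℕ) :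
    ⟪eH p, V (eH (2 * n))⟫ = a (2 * p - n) :=
  calc ⟪eH p, V (eH (2 * n))⟫
      = ⟪e p, W ↑(H2.orthogonalProjectionOnto (M (e n)))⟫ := by
        rw [Submodule.coe_inner, hV, hK, heH]
    _ = ⟪eH (2 * p), H2.orthogonalProjectionOnto (M (e n))⟫ := by
        rw [e.inner_apply_eq_inner_two_mul hW, Submodule.coe_inner, heH]
        push_cast; rfl
    _ = a (2 * p - n) := by
        rw [Submodule.inner_orthogonalProjectionOnto_eq_of_mem_left, heH, ← hM]
        push_cast; rfl

/- The symbol `φ` enters only through its Fourier coefficients `a` and its multiplication operator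
`M`, whose matrix is `⟪e i, M (e j)⟫ = a (i - j)`; in particular `φ = 0 ↔ a = 0`. Mathlib's inner
product is conjugate-linear in the first slot, so the paper's entry `⟨A e_j, e_i⟩` is
`⟪e i, A (e j)⟫` here. -/
theorem compact_iff_zero_general
    {L2 : Type*} [NormedAddCommGroup L2] [InnerProductSpace ℂ L2]
    -- the orthonormal (Fourier) basis `e n ↔ zⁿ` of `L²(𝕋)`
    (e : HilbertBasis ℤ ℂ L2)
    -- the Hardy space `H²`, the closed linear span of `{e n : n ≥ 0}`
    (H2 : Submodule ℂ L2) [CompleteSpace H2]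
    (eH : ℕ → H2) (heH : ∀ n : ℕ, (eH n : L2) = e (n : ℤ))
    -- the operator `W`: `W e_{2n} = e n`, `W e_{2n+1} = 0` for all `n ∈ ℤ`
    (W : L2 →L[ℂ] L2)
    (hW : ∀ n : ℤ, W (e (2 * n)) = e n ∧ W (e (2 * n + 1)) = 0)
    -- the operator `K : H² → L²`: `K e_{2n} = e n`, `K e_{2n+1} = e_{-n-1}` for all `n ≥ 0`
    (K : H2 →L[ℂ] L2)
    (hK : ∀ n : ℕ, K (eH (2 * n)) = e (n : ℤ) ∧ K (eH (2 * n + 1)) = e (-(n : ℤ) - 1))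
    -- `φ ∈ L^∞`, encoded by its Fourier coefficients `a` and multiplication operator `M = M_φ`
    (a : ℤ → ℂ) (M : L2 →L[ℂ] L2)
    (hM : ∀ i j : ℤ, ⟪e i, M (e j)⟫ = a (i - j))
    -- the slant H-Toeplitz operator `V_φ = W P M_φ K : H² → H²`
    (V : H2 →L[ℂ] H2)
    (hV : ∀ f : H2, (V f : L2) = W ↑(H2.orthogonalProjectionOnto (M (K f))))
 :
    IsCompactOperator ⇑V ↔ a = 0 := by
  constructor
  · intro hVc
    funext k
    have hmat := inner_slantHToeplitz_apply_even e H2 eH heH W hW K (fun n => (hK n).1) a M hM V hV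
    have heH_on : Orthonormal ℂ eH := by
      have hcomp : H2.subtypeₗᵢ ∘ eH = e ∘ ((↑) : ℕ → ℤ) := funext heH
      rw [← H2.subtypeₗᵢ.orthonormal_comp_iff, hcomp]
      exact e.orthonormal.comp _ Nat.cast_injective
    -- `a k` is the entry in row `j + k.toNat` and column `2 (2 j + |k|)`, for every `j`
    refine hVc.eq_zero_of_forall_inner_apply_orthonormal_eq
      (heH_on.comp (fun j => 2 * (2 * j + k.natAbs)) fun i j h => by dsimp only at h; omega)
      (w := fun j => eH (j + k.toNat)) (fun j => (heH_on.1 _).le) fun j => ?_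
    rw [Function.comp_apply, hmat]
    congr 1
    omega
  · rintro rfl
    have hM0 : M = 0 := e.continuousLinearMap_eq_zero e hM
    have hV0 : V = 0 := by
      ext f
      simp [hV, hM0]
    rw [hV0]
    exact isCompactOperator_zero

/-- `V_φ` is a compact operator on `H²` if and only if `φ = 0`. -/
theorem compact_iff_zero
    {L2 : Type*} [NormedAddCommGroup L2] [InnerProductSpace ℂ L2] [CompleteSpace L2]
    -- the orthonormal (Fourier) basis `e n ↔ zⁿ` of `L²(𝕋)`
    (e : HilbertBasis ℤ ℂ L2)
    -- the Hardy space `H²`, the closed linear span of `{e n : n ≥ 0}`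
    (H2 : Submodule ℂ L2) [CompleteSpace H2]
    (hH2 : H2 = (Submodule.span ℂ (Set.range fun n : ℕ => e (n : ℤ))).topologicalClosure)
    (eH : ℕ → H2) (heH : ∀ n : ℕ, (eH n : L2) = e (n : ℤ))
    -- the operator `W`: `W e_{2n} = e n`, `W e_{2n+1} = 0` for all `n ∈ ℤ`
    (W : L2 →L[ℂ] L2)
    (hW : ∀ n : ℤ, W (e (2 * n)) = e n ∧ W (e (2 * n + 1)) = 0)
    -- the operator `K : H² → L²`: `K e_{2n} = e n`, `K e_{2n+1} = e_{-n-1}` for all `n ≥ 0`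
    (K : H2 →L[ℂ] L2)
    (hK : ∀ n : ℕ, K (eH (2 * n)) = e (n : ℤ) ∧ K (eH (2 * n + 1)) = e (-(n : ℤ) - 1))
    -- `φ ∈ L^∞`, encoded by its Fourier coefficients `a` and multiplication operator `M = M_φ`
    (a : ℤ → ℂ) (M : L2 →L[ℂ] L2)
    (hM : ∀ i j : ℤ, ⟪e i, M (e j)⟫ = a (i - j))
    -- the slant H-Toeplitz operator `V_φ = W P M_φ K : H² → H²`
    (V : H2 →L[ℂ] H2)
    (hV : ∀ f : H2, (V f : L2) = W ↑(H2.orthogonalProjectionOnto (M (K f))))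
 :
    IsCompactOperator ⇑V ↔ a = 0 :=
  compact_iff_zero_general e H2 eH heH W hW K hK a M hM V hV
end

section
/- For φ ∈ L^∞(𝕋), the slant H-Toeplitz operator V_φ is self-adjoint (V_φ = V_φ*) if and only if φ = 0. -/
/-!
The matrix of `V_φ` has entries `⟪e_i, V_φ e_{2p}⟫ = φ̂(2i - p)`, so self-adjointness at the
entries `(2q, 2p)` gives `φ̂(4q - p) = conj φ̂(4p - q)`. Fixing `n = 4p - q` and letting
`p → ∞`, the value `conj φ̂(n)` recurs at the indices `15p - 4n → ∞`, while the Fourier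
coefficients of `φ` tend to zero (Bessel's inequality for `M_φ e_0`); hence `φ̂(n) = 0`.
-/

open scoped ComplexInnerProductSpace
open Filter Topology

theorem Orthonormal.tendsto_inner_cofinite_zero {𝕜 E ι : Type*} [RCLike 𝕜]
    [SeminormedAddCommGroup E] [InnerProductSpace 𝕜 E] {v : ι → E} (hv : Orthonormal 𝕜 v)
    (x : E) : Tendsto (fun i => inner 𝕜 (v i) x) cofinite (𝓝 0) := by
  rw [tendsto_zero_iff_norm_tendsto_zero]
  simpa using (hv.inner_products_summable x).tendsto_cofinite_zero.sqrt

namespace HilbertBasis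

variable {ι 𝕜 E : Type*} [RCLike 𝕜] [NormedAddCommGroup E] [InnerProductSpace 𝕜 E]
  (b : HilbertBasis ι 𝕜 E)

theorem ext_continuousLinearMap_s17 {F : Type*} [TopologicalSpace F] [AddCommMonoid F] [Module 𝕜 F]
    [T2Space F] {f g : E →L[𝕜] F} (h : ∀ i, f (b i) = g (b i)) : f = g :=
  ContinuousLinearMap.ext_on (Submodule.dense_iff_topologicalClosure_eq_top.mpr b.dense_span)
    (by rintro _ ⟨i, rfl⟩; exact h i)

theorem eq_zero_of_forall_inner_eq_zero_s17 {x : E} (h : ∀ i, inner 𝕜 (b i) x = 0) : x = 0 :=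
  (b.hasSum_repr x).unique (by simp [b.repr_apply_apply, h])

theorem inner_apply_eq_inner_two_mul_s17 (e : HilbertBasis ℤ 𝕜 E) {W : E →L[𝕜] E}
    (hW : ∀ n : ℤ, W (e (2 * n)) = e n ∧ W (e (2 * n + 1)) = 0) (i : ℤ) (x : E) :
    inner 𝕜 (e i) (W x) = inner 𝕜 (e (2 * i)) x := by
  suffices (innerSL 𝕜 (e i)).comp W = innerSL 𝕜 (e (2 * i)) from
    congrArg (fun T : E →L[𝕜] 𝕜 => T x) this
  refine e.ext_continuousLinearMap_s17 fun k => ?_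
  obtain ⟨n, rfl | rfl⟩ := Int.even_or_odd' k
  · simp [(hW n).1, orthonormal_iff_ite.mp e.orthonormal]
  · simp [(hW n).2, orthonormal_iff_ite.mp e.orthonormal]
    omega

end HilbertBasis

theorem eq_zero_of_apply_four_mul_sub_eq_conj {a : ℤ → ℂ} (ha : Tendsto a cofinite (𝓝 0))
    (h : ∀ p q : ℕ, a (4 * q - p) = starRingEnd ℂ (a (4 * p - q))) : a = 0 := by
  funext n
  have hinj : Function.Injective fun m : ℕ => 15 * ((m : ℤ) + n.natAbs) - 4 * n :=
    fun m m' hm => by simp only at hm; omega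
  have hrecur : ∀ m : ℕ, a (15 * ((m : ℤ) + n.natAbs) - 4 * n) = starRingEnd ℂ (a n) :=
    fun m => by
      convert h (m + n.natAbs) (4 * (m + n.natAbs) - n).toNat using 2
      · omega
      · congr 1; omega
  have hlim : Tendsto (fun m : ℕ => a (15 * ((m : ℤ) + n.natAbs) - 4 * n)) atTop (𝓝 0) :=
    Nat.cofinite_eq_atTop ▸ ha.comp hinj.tendsto_cofinite
  simpa using tendsto_nhds_unique (tendsto_const_nhds.congr fun m => (hrecur m).symm) hlim

theorem selfAdjoint_iff_zero_general
    {L2 : Type*} [NormedAddCommGroup L2] [InnerProductSpace ℂ L2] [CompleteSpace L2]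
    -- the orthonormal (Fourier) basis `e n ↔ zⁿ` of `L²(𝕋)`
    (e : HilbertBasis ℤ ℂ L2)
    -- the Hardy space `H²`, the closed linear span of `{e n : n ≥ 0}`
    (H2 : Submodule ℂ L2) [CompleteSpace H2]
    (eH : ℕ → H2) (heH : ∀ n : ℕ, (eH n : L2) = e (n : ℤ))
    -- the operator `W`: `W e_{2n} = e n`, `W e_{2n+1} = 0` for all `n ∈ ℤ`
    (W : L2 →L[ℂ] L2)
    (hW : ∀ n : ℤ, W (e (2 * n)) = e n ∧ W (e (2 * n + 1)) = 0)
    -- the operator `K : H² → L²`: `K e_{2n} = e n`, `K e_{2n+1} = e_{-n-1}` for all `n ≥ 0`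
    (K : H2 →L[ℂ] L2)
    (hK : ∀ n : ℕ, K (eH (2 * n)) = e (n : ℤ) ∧ K (eH (2 * n + 1)) = e (-(n : ℤ) - 1))
    -- `φ ∈ L^∞`, encoded by its Fourier coefficients `a` and multiplication operator `M = M_φ`
    (a : ℤ → ℂ) (M : L2 →L[ℂ] L2)
    (hM : ∀ i j : ℤ, ⟪e i, M (e j)⟫ = a (i - j))
    -- the slant H-Toeplitz operator `V_φ = W P M_φ K : H² → H²`
    (V : H2 →L[ℂ] H2)
    (hV : ∀ f : H2, (V f : L2) = W ↑(H2.orthogonalProjectionOnto (M (K f))))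
 :
    V = ContinuousLinearMap.adjoint V ↔ a = 0 := by
  have hentry : ∀ (i p : ℕ), ⟪eH i, V (eH (2 * p))⟫ = a (2 * i - p) := by
    intro i p
    have h2i : e (2 * i) = (eH (2 * i) : L2) := by simp [heH]
    rw [Submodule.coe_inner, hV, heH, e.inner_apply_eq_inner_two_mul_s17 hW, h2i,
      ← Submodule.coe_inner, Submodule.inner_orthogonalProjectionOnto_eq_of_mem_left, heH,
      (hK p).1, hM]
    simp
  constructor
  · intro hself
    have hsymm : ∀ x y : H2, ⟪x, V y⟫ = starRingEnd ℂ ⟪y, V x⟫ := fun x y => by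
      rw [inner_conj_symm, ← ContinuousLinearMap.adjoint_inner_right, ← hself]
    refine eq_zero_of_apply_four_mul_sub_eq_conj ?_ fun p q => ?_
    · simpa [hM] using e.orthonormal.tendsto_inner_cofinite_zero (M (e 0))
    · have h := hsymm (eH (2 * q)) (eH (2 * p))
      rw [hentry, hentry] at h
      push_cast at h
      convert h using 3 <;> ring
  · rintro rfl
    have hM0 : M = 0 := e.ext_continuousLinearMap_s17 fun j =>
      e.eq_zero_of_forall_inner_eq_zero_s17 fun i => by simpa using hM i j
    have hV0 : V = 0 := by
      ext f
      simp [hV, hM0]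
    simp [hV0]

/-- `V_φ` is self-adjoint iff `φ = 0`. -/
theorem selfAdjoint_iff_zero
    {L2 : Type*} [NormedAddCommGroup L2] [InnerProductSpace ℂ L2] [CompleteSpace L2]
    -- the orthonormal (Fourier) basis `e n ↔ zⁿ` of `L²(𝕋)`
    (e : HilbertBasis ℤ ℂ L2)
    -- the Hardy space `H²`, the closed linear span of `{e n : n ≥ 0}`
    (H2 : Submodule ℂ L2) [CompleteSpace H2]
    (hH2 : H2 = (Submodule.span ℂ (Set.range fun n : ℕ => e (n : ℤ))).topologicalClosure)
    (eH : ℕ → H2) (heH : ∀ n : ℕ, (eH n : L2) = e (n : ℤ))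
    -- the operator `W`: `W e_{2n} = e n`, `W e_{2n+1} = 0` for all `n ∈ ℤ`
    (W : L2 →L[ℂ] L2)
    (hW : ∀ n : ℤ, W (e (2 * n)) = e n ∧ W (e (2 * n + 1)) = 0)
    -- the operator `K : H² → L²`: `K e_{2n} = e n`, `K e_{2n+1} = e_{-n-1}` for all `n ≥ 0`
    (K : H2 →L[ℂ] L2)
    (hK : ∀ n : ℕ, K (eH (2 * n)) = e (n : ℤ) ∧ K (eH (2 * n + 1)) = e (-(n : ℤ) - 1))
    -- `φ ∈ L^∞`, encoded by its Fourier coefficients `a` and multiplication operator `M = M_φ`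
    (a : ℤ → ℂ) (M : L2 →L[ℂ] L2)
    (hM : ∀ i j : ℤ, ⟪e i, M (e j)⟫ = a (i - j))
    -- the slant H-Toeplitz operator `V_φ = W P M_φ K : H² → H²`
    (V : H2 →L[ℂ] H2)
    (hV : ∀ f : H2, (V f : L2) = W ↑(H2.orthogonalProjectionOnto (M (K f))))
 :
    V = ContinuousLinearMap.adjoint V ↔ a = 0 :=
  selfAdjoint_iff_zero_general e H2 eH heH W hW K hK a M hM V hV
end
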